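/- Let c be a solution of the area preserving curve shortening flow with Neumann free boundary on Σ, and let γₜ be a C¹-family of boundary curves on Σ joining c(a,t) to c(b,t). Then the oriented enclosed area A(cₜ, γₜ) := ½∮_{cₜ} (p¹ dp² - p² dp¹) - ½∮_{γₜ} (p¹ dp² - p² dp¹) is constant in time: d/dt A(cₜ, γₜ) = -∫ₐᵇ ⟨∂ₜcₜ, ν⟩ ds = 0. -/

import Mathlib

open Complex MeasureTheory Set Filter
open scoped Topology

/-- Spatial derivative `∂ₚ` of a one-parameter family of plane curves (the plane is `ℂ ≅ ℝ²`). -/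
noncomputable def pderiv (c : ℝ → ℝ → ℂ) (p t : ℝ) : ℂ := deriv (fun q => c q t) p

/-- The real (Euclidean) inner product on the plane `ℂ ≅ ℝ²`. -/
noncomputable def rinner (x y : ℂ) : ℝ := x.re * y.re + x.im * y.im

/-- Arclength derivative `∂ₛ = |∂ₚc|⁻¹ ∂ₚ` of a scalar quantity along a family of curves. -/
noncomputable def sderivS (c : ℝ → ℝ → ℂ) (f : ℝ → ℝ → ℝ) (p t : ℝ) : ℝ :=
  ‖pderiv c p t‖⁻¹ * deriv (fun q => f q t) p

/-- Arclength derivative of a vector quantity along a family of curves. -/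
noncomputable def sderivV (c : ℝ → ℝ → ℂ) (f : ℝ → ℝ → ℂ) (p t : ℝ) : ℂ :=
  (‖pderiv c p t‖⁻¹ : ℝ) • deriv (fun q => f q t) p

/-- A solution `c : [pa,pb] × [0,T) → ℝ²` of the area preserving curve shortening flow
`∂ₜ c = (κ - κ̄) ν`, with unit tangent `tang = ∂ₛ c`, unit normal `nor = J tang`
(rotation by `+π/2`, i.e. multiplication by `I`), curvature `curv` (via the Frenet equation),
length `len` and average curvature `curvAvg = (∫ κ ds)/len`. -/
structure APCSF where
  pa : ℝ
  pb : ℝ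
  T : ℝ
  c : ℝ → ℝ → ℂ
  curv : ℝ → ℝ → ℝ
  tang : ℝ → ℝ → ℂ
  nor : ℝ → ℝ → ℂ
  curvAvg : ℝ → ℝ
  len : ℝ → ℝ
  hab : pa < pb
  hT : 0 < T
  hsmooth : ContDiff ℝ (⊤ : ℕ∞) (Function.uncurry c)
  hreg : ∀ p t, pderiv c p t ≠ 0
  htang : ∀ p t, tang p t = (‖pderiv c p t‖⁻¹ : ℝ) • pderiv c p t
  hnor : ∀ p t, nor p t = Complex.I * tang p t
  hfrenet : ∀ p t, deriv (fun q => tang q t) p = (curv p t * ‖pderiv c p t‖) • nor p t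
  hlen : ∀ t, len t = ∫ p in pa..pb, ‖pderiv c p t‖
  hcurvAvg : ∀ t, curvAvg t * len t = ∫ p in pa..pb, curv p t * ‖pderiv c p t‖
  hflow : ∀ p t, t ∈ Set.Ico 0 T →
    HasDerivAt (fun s => c p s) ((curv p t - curvAvg t) • nor p t) t

/-- A global-in-time (`T = ∞`) solution of the area preserving curve shortening flow. -/
structure APCSFinf where
  pa : ℝ
  pb : ℝ
  c : ℝ → ℝ → ℂ
  curv : ℝ → ℝ → ℝ
  tang : ℝ → ℝ → ℂ
  nor : ℝ → ℝ → ℂ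
  curvAvg : ℝ → ℝ
  len : ℝ → ℝ
  hab : pa < pb
  hsmooth : ContDiff ℝ (⊤ : ℕ∞) (Function.uncurry c)
  hreg : ∀ p t, pderiv c p t ≠ 0
  htang : ∀ p t, tang p t = (‖pderiv c p t‖⁻¹ : ℝ) • pderiv c p t
  hnor : ∀ p t, nor p t = Complex.I * tang p t
  hfrenet : ∀ p t, deriv (fun q => tang q t) p = (curv p t * ‖pderiv c p t‖) • nor p t
  hlen : ∀ t, len t = ∫ p in pa..pb, ‖pderiv c p t‖
  hcurvAvg : ∀ t, curvAvg t * len t = ∫ p in pa..pb, curv p t * ‖pderiv c p t‖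
  hflow : ∀ p t, 0 ≤ t →
    HasDerivAt (fun s => c p s) ((curv p t - curvAvg t) • nor p t) t

/-- A smooth convex closed support curve `Σ`, parametrized by arclength with period `per`,
with curvature `sk ≥ 0`. -/
structure SupportCurve where
  sf : ℝ → ℂ
  per : ℝ
  sk : ℝ → ℝ
  hper : 0 < per
  hperiodic : Function.Periodic sf per
  hsmooth : ContDiff ℝ (⊤ : ℕ∞) sf
  harclength : ∀ u, ‖deriv sf u‖ = 1
  hsk : ∀ u, deriv (deriv sf) u = sk u • (Complex.I * deriv sf u)
  hconvex : ∀ u, 0 ≤ sk u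
  hinj : Set.InjOn sf (Set.Ico 0 per)

/-- `Σd`: the minimal distance between points of `Σ` with antiparallel tangents. -/
noncomputable def SupportCurve.antipodalDist (S : SupportCurve) : ℝ :=
  sInf {r : ℝ | ∃ u v : ℝ, deriv S.sf u = -deriv S.sf v ∧ r = ‖S.sf u - S.sf v‖}

/-- Neumann free boundary conditions (outer case): the endpoints move on `Σ` and the curve
meets `Σ` orthogonally, `τ(a,t) = -Σν⃗(c(a,t))` and `τ(b,t) = Σν⃗(c(b,t))`,
where `Σν⃗ = I · Στ⃗` is the normal of the support curve. -/
def APCSF.NeumannBC (F : APCSF) (S : SupportCurve) : Prop :=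
  (∀ t ∈ Set.Ico (0:ℝ) F.T, F.c F.pa t ∈ Set.range S.sf ∧ F.c F.pb t ∈ Set.range S.sf) ∧
  (∀ t ∈ Set.Ico (0:ℝ) F.T, ∀ u, S.sf u = F.c F.pa t →
      F.tang F.pa t = -(Complex.I * deriv S.sf u)) ∧
  (∀ t ∈ Set.Ico (0:ℝ) F.T, ∀ u, S.sf u = F.c F.pb t →
      F.tang F.pb t = Complex.I * deriv S.sf u)


section AuxRinner

lemma rinner_conj (x y : ℂ) : rinner x y = ((starRingEnd ℂ) x * y).re := by
  simp [rinner, Complex.mul_re]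

lemma rinner_smul_left (r : ℝ) (x y : ℂ) : rinner (r • x) y = r * rinner x y := by
  simp [rinner, Complex.smul_re, Complex.smul_im]; ring

lemma rinner_self (x : ℂ) : rinner x x = ‖x‖ ^ 2 := by
  simp [rinner, ← Complex.normSq_eq_norm_sq, Complex.normSq_apply]

lemma hasDerivAt_conj {g : ℝ → ℂ} {v : ℂ} {x : ℝ} (hg : HasDerivAt g v x) :
    HasDerivAt (fun y => (starRingEnd ℂ) (g y)) ((starRingEnd ℂ) v) x := by
  have := ((Complex.conjCLE : ℂ ≃L[ℝ] ℂ) :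
      ℂ →L[ℝ] ℂ).hasFDerivAt.comp_hasDerivAt x hg
  simpa [Function.comp_def] using this

lemma conj_real_smul (r : ℝ) (z : ℂ) :
    (starRingEnd ℂ) (r • z) = r • (starRingEnd ℂ) z := by
  rw [Complex.real_smul, map_mul, Complex.conj_ofReal, ← Complex.real_smul]

end AuxRinner

section AuxFamily
variable {f : ℝ → ℝ → ℂ}

lemma hasDerivAt_slice_t (hf : ContDiff ℝ 1 (Function.uncurry f)) (p t : ℝ) :
    HasDerivAt (fun s => f p s) (fderiv ℝ (Function.uncurry f) (p, t) (0, 1)) t := by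
  have hF : HasFDerivAt (Function.uncurry f) (fderiv ℝ (Function.uncurry f) (p, t)) (p, t) :=
    (hf.differentiable one_ne_zero (p, t)).hasFDerivAt
  have hc : HasDerivAt (fun s : ℝ => ((p, s) : ℝ × ℝ)) ((0 : ℝ), (1 : ℝ)) t :=
    (hasDerivAt_const t p).prodMk (hasDerivAt_id t)
  exact hF.comp_hasDerivAt t hc

lemma hasDerivAt_slice_p (hf : ContDiff ℝ 1 (Function.uncurry f)) (p t : ℝ) :
    HasDerivAt (fun q => f q t) (fderiv ℝ (Function.uncurry f) (p, t) (1, 0)) p := by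
  have hF : HasFDerivAt (Function.uncurry f) (fderiv ℝ (Function.uncurry f) (p, t)) (p, t) :=
    (hf.differentiable one_ne_zero (p, t)).hasFDerivAt
  have hc : HasDerivAt (fun q : ℝ => ((q, t) : ℝ × ℝ)) ((1 : ℝ), (0 : ℝ)) p :=
    (hasDerivAt_id p).prodMk (hasDerivAt_const p t)
  exact hF.comp_hasDerivAt p hc

lemma cont_partial (hf : ContDiff ℝ 1 (Function.uncurry f)) (e : ℝ × ℝ) :
    Continuous fun z : ℝ × ℝ => fderiv ℝ (Function.uncurry f) z e :=
  (hf.continuous_fderiv one_ne_zero).clm_apply continuous_const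

end AuxFamily

namespace SupportCurve
variable (S : SupportCurve)

lemma deriv_periodic : Function.Periodic (deriv S.sf) S.per := by
  intro x
  have h1 : (fun y => S.sf (y + S.per)) = S.sf := funext fun y => S.hperiodic y
  have := deriv_comp_add_const (f := S.sf) (a := S.per) (x := x)
  rw [h1] at this
  exact this.symm

lemma exists_rep (u₀ : ℝ) : ∃ u ∈ Set.Ico 0 S.per,
    S.sf u = S.sf u₀ ∧ deriv S.sf u = deriv S.sf u₀ := by
  refine ⟨toIcoMod S.hper 0 u₀, toIcoMod_mem_Ico' S.hper u₀, ?_, ?_⟩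
  · rw [toIcoMod]; exact S.hperiodic.sub_zsmul_eq _
  · rw [toIcoMod]; exact S.deriv_periodic.sub_zsmul_eq _

lemma exists_int_of_eq {x y : ℝ} (h : S.sf x = S.sf y) : ∃ n : ℤ, x = y + n * S.per := by
  have hx := toIcoMod_mem_Ico' S.hper x
  have hy := toIcoMod_mem_Ico' S.hper y
  have hsx : S.sf (toIcoMod S.hper 0 x) = S.sf x := by
    rw [toIcoMod]; exact S.hperiodic.sub_zsmul_eq _
  have hsy : S.sf (toIcoMod S.hper 0 y) = S.sf y := by
    rw [toIcoMod]; exact S.hperiodic.sub_zsmul_eq _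
  have heq : toIcoMod S.hper 0 x = toIcoMod S.hper 0 y :=
    S.hinj hx hy (by rw [hsx, hsy, h])
  have hx' : x - toIcoDiv S.hper 0 x • S.per = y - toIcoDiv S.hper 0 y • S.per := heq
  refine ⟨toIcoDiv S.hper 0 x - toIcoDiv S.hper 0 y, ?_⟩
  have := sub_eq_sub_iff_sub_eq_sub.mp hx'
  push_cast [zsmul_eq_mul] at hx' ⊢
  linarith [hx']

lemma exists_near {u₀ : ℝ} (hu₀ : u₀ ∈ Set.Ico 0 S.per) {δ : ℝ} (hδ : 0 < δ) :
    ∃ ε > 0, ∀ w, ‖S.sf w - S.sf u₀‖ < ε → ∃ w', |w' - u₀| < δ ∧ S.sf w' = S.sf w := by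
  classical
  set C : Set ℝ := Set.Icc 0 S.per ∩
    {w | δ ≤ |w - u₀| ∧ δ ≤ |w - u₀ - S.per| ∧ δ ≤ |w - u₀ + S.per|} with hC
  have hCc : IsCompact C := by
    apply isCompact_Icc.inter_right
    apply IsClosed.inter
    · exact isClosed_le continuous_const ((continuous_id.sub continuous_const).abs)
    apply IsClosed.inter
    · exact isClosed_le continuous_const (((continuous_id.sub continuous_const).sub continuous_const).abs)
    · exact isClosed_le continuous_const (((continuous_id.sub continuous_const).add continuous_const).abs)
  have key : ∃ ε > 0, ∀ w ∈ C, ε ≤ ‖S.sf w - S.sf u₀‖ := by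
    by_cases hne : C.Nonempty
    · obtain ⟨w₀, hw₀C, hmin⟩ := hCc.exists_isMinOn hne
        ((S.hsmooth.continuous.sub continuous_const).norm.continuousOn)
      refine ⟨‖S.sf w₀ - S.sf u₀‖, ?_, fun w hw => hmin hw⟩
      rcases eq_or_lt_of_le (norm_nonneg (S.sf w₀ - S.sf u₀)) with h | h
      swap
      · exact h
      · exfalso
        have h0 : S.sf w₀ = S.sf u₀ := by
          have h' := h.symm
          rw [norm_eq_zero, sub_eq_zero] at h'
          exact h'
        obtain ⟨n, hn⟩ := S.exists_int_of_eq h0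
        have h1 := hw₀C.1
        have h2 := hw₀C.2
        simp only [Set.mem_setOf_eq] at h2
        have hper := S.hper
        -- w₀ = u₀ + n per, w₀ ∈ [0, per], u₀ ∈ [0, per)
        have hn0 : n = 0 ∨ n = 1 := by
          rcases lt_trichotomy n 0 with h' | h' | h'
          · exfalso
            have hle1 : n ≤ -1 := by omega
            have : (n : ℝ) ≤ -1 := by
              have h9 : ((n : ℝ)) ≤ ((-1 : ℤ) : ℝ) := Int.cast_le.mpr hle1
              simpa using h9
            nlinarith [h1.1, hu₀.2, h1.2, hu₀.1]
          · exact Or.inl h'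
          · right
            by_contra hne1
            have h2n : 2 ≤ n := by omega
            have : (2 : ℝ) ≤ (n : ℝ) := by
              have h9 : (((2:ℤ) : ℝ)) ≤ ((n : ℤ) : ℝ) := Int.cast_le.mpr h2n
              simpa using h9
            nlinarith [h1.2, hu₀.1]
        rcases hn0 with rfl | rfl
        · simp at hn
          rw [hn] at h2
          have := h2.1
          simp at this
          linarith
        · rw [hn] at h2
          have := h2.2.1
          have h3 : u₀ + (1:ℤ) * S.per - u₀ - S.per = 0 := by push_cast; ring
          rw [h3] at this
          simp at this
          linarith
    · exact ⟨1, one_pos, fun w hw => absurd ⟨w, hw⟩ hne⟩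
  obtain ⟨ε, hε, hbound⟩ := key
  refine ⟨ε, hε, fun w hw => ?_⟩
  obtain ⟨w'', hw''mem, hw''eq, -⟩ := S.exists_rep w
  have hw''Icc : w'' ∈ Set.Icc 0 S.per := ⟨hw''mem.1, hw''mem.2.le⟩
  have hnotC : w'' ∉ C := by
    intro hmem
    have := hbound w'' hmem
    rw [hw''eq] at this
    linarith
  have : ¬(δ ≤ |w'' - u₀| ∧ δ ≤ |w'' - u₀ - S.per| ∧ δ ≤ |w'' - u₀ + S.per|) := by
    intro h; exact hnotC ⟨hw''Icc, h⟩
  push_neg at this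
  by_cases h1 : δ ≤ |w'' - u₀|
  · by_cases h2 : δ ≤ |w'' - u₀ - S.per|
    · have h3 := this h1 h2
      refine ⟨w'' + S.per, ?_, by rw [S.hperiodic w'', hw''eq]⟩
      have : w'' + S.per - u₀ = w'' - u₀ + S.per := by ring
      rw [this]; exact h3
    · push_neg at h2
      refine ⟨w'' - S.per, ?_, by rw [S.hperiodic.sub_eq, hw''eq]⟩
      have : w'' - S.per - u₀ = w'' - u₀ - S.per := by ring
      rw [this]; exact h2
  · push_neg at h1
    exact ⟨w'', h1, hw''eq⟩

lemma tangent {g : ℝ → ℂ} {x : ℝ} {v : ℂ} {u₀ : ℝ}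
    (hg : HasDerivAt g v x) (hgS : ∀ s, g s ∈ Set.range S.sf) (hu₀ : S.sf u₀ = g x) :
    ∃ α : ℝ, v = α • deriv S.sf u₀ := by
  obtain ⟨u, humem, husf, hud⟩ := S.exists_rep u₀
  set τ := deriv S.sf u with hτdef
  have hτ1 : ‖τ‖ = 1 := S.harclength u
  have hsf_diff : ∀ w, HasDerivAt S.sf (deriv S.sf w) w := fun w =>
    (S.hsmooth.differentiable (by simp) w).hasDerivAt
  set a : ℝ → ℝ := fun w => ((starRingEnd ℂ) τ * S.sf w).re with ha_def
  have hasd : ∀ w, HasDerivAt a (((starRingEnd ℂ) τ * deriv S.sf w).re) w := by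
    intro w
    have h1 := (hsf_diff w).const_mul ((starRingEnd ℂ) τ)
    exact (Complex.reCLM.hasFDerivAt.comp_hasDerivAt w h1)
  have haC : ContDiff ℝ (⊤ : ℕ∞) a := by
    exact Complex.reCLM.contDiff.comp (contDiff_const.mul S.hsmooth)
  have hau : ((starRingEnd ℂ) τ * τ).re = 1 := by
    have : (starRingEnd ℂ) τ * τ = (Complex.normSq τ : ℂ) := by
      rw [mul_comm]; exact Complex.mul_conj τ
    rw [this]
    have : Complex.normSq τ = ‖τ‖ ^ 2 := by
      rw [Complex.normSq_eq_norm_sq]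
    simp [this, hτ1]
  have hstrict : HasStrictDerivAt a 1 u := by
    have := haC.hasStrictDerivAt (by simp) (x := u)
    rwa [(hasd u).deriv, hau] at this
  have hF := hstrict.hasStrictFDerivAt_equiv one_ne_zero
  set φ : ℝ → ℝ := hF.localInverse a _ u with hφdef
  have hφd : HasDerivAt φ 1 (a u) := by
    have := hstrict.to_localInverse (hf' := one_ne_zero)
    simpa using this.hasDerivAt
  obtain ⟨δ, hδ, hleft⟩ : ∃ δ > 0, ∀ w, |w - u| < δ → φ (a w) = w := by
    obtain ⟨δ, hδ, h⟩ := Metric.eventually_nhds_iff.mp hF.eventually_left_inverse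
    exact ⟨δ, hδ, fun w hw => h (by rwa [Real.dist_eq])⟩
  obtain ⟨ε, hε, hnear⟩ := S.exists_near humem hδ
  have hgx : S.sf u = g x := by rw [husf, hu₀]
  have hgc : ∀ᶠ s in 𝓝 x, ‖g s - g x‖ < ε := by
    have := hg.continuousAt
    have h2 := Metric.tendsto_nhds.mp this ε hε
    filter_upwards [h2] with s hs
    rwa [dist_eq_norm] at hs
  set ub : ℝ → ℝ := fun s => φ (((starRingEnd ℂ) τ * g s).re) with hubdef
  have hrep : ∀ᶠ s in 𝓝 x, S.sf (ub s) = g s := by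
    filter_upwards [hgc] with s hs
    obtain ⟨w₀, hw₀⟩ := hgS s
    have : ‖S.sf w₀ - S.sf u‖ < ε := by rw [hw₀, hgx]; exact hs
    obtain ⟨w', hw'δ, hw'eq⟩ := hnear w₀ this
    have hgs : g s = S.sf w' := by rw [hw'eq, hw₀]
    have : ub s = w' := by
      rw [hubdef]; simp only
      rw [hgs]
      exact hleft w' hw'δ
    rw [this, ← hgs]
  have hubx : ub x = u := by
    have : ((starRingEnd ℂ) τ * g x).re = a u := by rw [← hgx]
    rw [hubdef]; simp only; rw [this]
    exact hleft u (by simpa using hδ)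
  -- derivative of ub
  have hinn : HasDerivAt (fun s => ((starRingEnd ℂ) τ * g s).re) (((starRingEnd ℂ) τ * v).re) x := by
    have h1 := hg.const_mul ((starRingEnd ℂ) τ)
    exact (Complex.reCLM.hasFDerivAt.comp_hasDerivAt x h1)
  have hφd' : HasDerivAt φ 1 (((starRingEnd ℂ) τ * g x).re) := by
    have : ((starRingEnd ℂ) τ * g x).re = a u := by rw [← hgx]
    rwa [this]
  have hub : HasDerivAt ub (((starRingEnd ℂ) τ * v).re) x := by
    have := hφd'.comp x hinn
    rw [one_mul] at this
    exact this
  have hcomp : HasDerivAt (fun s => S.sf (ub s)) ((((starRingEnd ℂ) τ * v).re) • τ) x := by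
    have hsf' : HasDerivAt S.sf τ (ub x) := by rw [hubx]; exact hsf_diff u
    exact HasDerivAt.scomp x hsf' hub
  have hg2 : HasDerivAt g ((((starRingEnd ℂ) τ * v).re) • τ) x := by
    apply hcomp.congr_of_eventuallyEq
    filter_upwards [hrep] with s hs
    exact hs.symm
  refine ⟨((starRingEnd ℂ) τ * v).re, ?_⟩
  rw [← hud]
  exact hg.unique hg2

end SupportCurve

lemma key (f dpf dtf : ℝ → ℝ → ℂ)
    (hdp : ∀ p s, HasDerivAt (fun q => f q s) (dpf p s) p)
    (hdt : ∀ p s, HasDerivAt (fun s' => f p s') (dtf p s) s)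
    (hcf : Continuous (Function.uncurry f))
    (hcdp : Continuous (Function.uncurry dpf))
    (hcdt : Continuous (Function.uncurry dtf))
    (a b t : ℝ) :
    HasDerivAt
      (fun s => ∫ p in a..b, rinner (Complex.I * f p s) (deriv (fun q => f q s) p))
      ((∫ p in a..b,
          ((starRingEnd ℂ) (Complex.I * dtf p t) * dpf p t
            - (starRingEnd ℂ) (Complex.I * dpf p t) * dtf p t).re)
        + (rinner (Complex.I * f b t) (dtf b t)
            - rinner (Complex.I * f a t) (dtf a t))) t := by
  -- continuity of slices
  have hfc : ∀ s, Continuous fun p => f p s := fun s =>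
    hcf.comp (continuous_id.prodMk continuous_const)
  have hdpc : ∀ s, Continuous fun p => dpf p s := fun s =>
    hcdp.comp (continuous_id.prodMk continuous_const)
  have hdtcp : ∀ s, Continuous fun p => dtf p s := fun s =>
    hcdt.comp (continuous_id.prodMk continuous_const)
  have hconjc : Continuous fun z : ℂ => (starRingEnd ℂ) (Complex.I * z) :=
    Complex.continuous_conj.comp (continuous_const.mul continuous_id)
  -- the complex-valued integral
  set W : ℝ → ℂ := fun s => ∫ p in a..b, (starRingEnd ℂ) (Complex.I * f p s) * dpf p s
    with hWdef
  have hWint : ∀ s, IntervalIntegrable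
      (fun p => (starRingEnd ℂ) (Complex.I * f p s) * dpf p s) volume a b := fun s =>
    ((hconjc.comp (hfc s)).mul (hdpc s)).intervalIntegrable a b
  have hΦ : (fun s => ∫ p in a..b, rinner (Complex.I * f p s) (deriv (fun q => f q s) p))
      = fun s => (W s).re := by
    funext s
    have h1 : (∫ p in a..b, rinner (Complex.I * f p s) (deriv (fun q => f q s) p))
        = ∫ p in a..b,
          Complex.reCLM ((starRingEnd ℂ) (Complex.I * f p s) * dpf p s) := by
      apply intervalIntegral.integral_congr
      intro p _
      show rinner (Complex.I * f p s) (deriv (fun q => f q s) p)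
          = Complex.reCLM ((starRingEnd ℂ) (Complex.I * f p s) * dpf p s)
      rw [(hdp p s).deriv, rinner_conj]
      rfl
    rw [h1, ContinuousLinearMap.intervalIntegral_comp_comm _ (hWint s)]
    rfl
  -- the complex derivative
  set DW : ℂ := (∫ p in a..b,
      ((starRingEnd ℂ) (Complex.I * dtf p t) * dpf p t
        - (starRingEnd ℂ) (Complex.I * dpf p t) * dtf p t))
    + ((starRingEnd ℂ) (Complex.I * f b t) * dtf b t
        - (starRingEnd ℂ) (Complex.I * f a t) * dtf a t) with hDWdef
  have hDint : IntervalIntegrable (fun p =>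
      (starRingEnd ℂ) (Complex.I * dtf p t) * dpf p t
        - (starRingEnd ℂ) (Complex.I * dpf p t) * dtf p t) volume a b :=
    (((hconjc.comp (hdtcp t)).mul (hdpc t)).sub
      ((hconjc.comp (hdpc t)).mul (hdtcp t))).intervalIntegrable a b
  have hWd : HasDerivAt W DW t := by
    rw [hasDerivAt_iff_tendsto_slope]
    -- the difference-quotient representation
    set G : ℝ → ℂ := fun s =>
      (∫ p in a..b,
        (starRingEnd ℂ) (Complex.I * ((s - t)⁻¹ • (f p s - f p t))) * dpf p s
          - (starRingEnd ℂ) (Complex.I * dpf p t) * ((s - t)⁻¹ • (f p s - f p t)))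
      + ((starRingEnd ℂ) (Complex.I * f b t) * ((s - t)⁻¹ • (f b s - f b t))
          - (starRingEnd ℂ) (Complex.I * f a t) * ((s - t)⁻¹ • (f a s - f a t))) with hGdef
    have hident : ∀ s, s ≠ t → slope W t s = G s := by
      intro s hs
      have hint1 : IntervalIntegrable (fun p =>
          (starRingEnd ℂ) (Complex.I * (f p s - f p t)) * dpf p s) volume a b :=
        ((hconjc.comp ((hfc s).sub (hfc t))).mul (hdpc s)).intervalIntegrable a b
      have hint2 : IntervalIntegrable (fun p =>
          (starRingEnd ℂ) (Complex.I * dpf p t) * (f p s - f p t)) volume a b :=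
        ((hconjc.comp (hdpc t)).mul ((hfc s).sub (hfc t))).intervalIntegrable a b
      have hgder : ∀ p, HasDerivAt
          (fun q => (starRingEnd ℂ) (Complex.I * f q t) * (f q s - f q t))
          ((starRingEnd ℂ) (Complex.I * dpf p t) * (f p s - f p t)
            + (starRingEnd ℂ) (Complex.I * f p t) * (dpf p s - dpf p t)) p := by
        intro p
        exact (hasDerivAt_conj ((hdp p t).const_mul Complex.I)).mul
          ((hdp p s).sub (hdp p t))
      have hgderc : IntervalIntegrable (fun p =>
          (starRingEnd ℂ) (Complex.I * dpf p t) * (f p s - f p t)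
            + (starRingEnd ℂ) (Complex.I * f p t) * (dpf p s - dpf p t)) volume a b := by
        apply Continuous.intervalIntegrable
        exact ((hconjc.comp (hdpc t)).mul ((hfc s).sub (hfc t))).add
          ((hconjc.comp (hfc t)).mul ((hdpc s).sub (hdpc t)))
      have hFTC := intervalIntegral.integral_eq_sub_of_hasDerivAt
        (f := fun q => (starRingEnd ℂ) (Complex.I * f q t) * (f q s - f q t))
        (fun p _ => hgder p) hgderc
      have hsub : W s - W t = ∫ p in a..b,
          ((starRingEnd ℂ) (Complex.I * f p s) * dpf p s
            - (starRingEnd ℂ) (Complex.I * f p t) * dpf p t) := by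
        rw [hWdef]; exact (intervalIntegral.integral_sub (hWint s) (hWint t)).symm
      have hpt : ∀ p,
          (starRingEnd ℂ) (Complex.I * f p s) * dpf p s
            - (starRingEnd ℂ) (Complex.I * f p t) * dpf p t
          = ((starRingEnd ℂ) (Complex.I * (f p s - f p t)) * dpf p s
              - (starRingEnd ℂ) (Complex.I * dpf p t) * (f p s - f p t))
            + ((starRingEnd ℂ) (Complex.I * dpf p t) * (f p s - f p t)
              + (starRingEnd ℂ) (Complex.I * f p t) * (dpf p s - dpf p t)) := by
        intro p
        simp only [mul_sub, map_sub, sub_mul]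
        ring
      have hsub2 : W s - W t = (∫ p in a..b,
          ((starRingEnd ℂ) (Complex.I * (f p s - f p t)) * dpf p s
            - (starRingEnd ℂ) (Complex.I * dpf p t) * (f p s - f p t)))
          + ((starRingEnd ℂ) (Complex.I * f b t) * (f b s - f b t)
            - (starRingEnd ℂ) (Complex.I * f a t) * (f a s - f a t)) := by
        rw [hsub]
        rw [intervalIntegral.integral_congr (g := fun p =>
          ((starRingEnd ℂ) (Complex.I * (f p s - f p t)) * dpf p s
            - (starRingEnd ℂ) (Complex.I * dpf p t) * (f p s - f p t))
          + ((starRingEnd ℂ) (Complex.I * dpf p t) * (f p s - f p t)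
            + (starRingEnd ℂ) (Complex.I * f p t) * (dpf p s - dpf p t)))
          (fun p _ => hpt p)]
        rw [intervalIntegral.integral_add (hint1.sub hint2) hgderc, hFTC]
      rw [slope_def_module, hsub2, hGdef]
      simp only [smul_add]
      congr 1
      · rw [← intervalIntegral.integral_smul]
        apply intervalIntegral.integral_congr
        intro p _
        show (s - t)⁻¹ • ((starRingEnd ℂ) (Complex.I * (f p s - f p t)) * dpf p s
            - (starRingEnd ℂ) (Complex.I * dpf p t) * (f p s - f p t))
          = (starRingEnd ℂ) (Complex.I * ((s - t)⁻¹ • (f p s - f p t))) * dpf p s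
            - (starRingEnd ℂ) (Complex.I * dpf p t) * ((s - t)⁻¹ • (f p s - f p t))
        simp only [Complex.real_smul, map_mul, map_sub, Complex.conj_ofReal, Complex.conj_I]
        ring
      · simp only [Complex.real_smul, map_mul, map_sub, Complex.conj_ofReal, Complex.conj_I]
        ring
    -- convergence
    have hKc : IsCompact ((Set.uIcc a b) ×ˢ (Set.Icc (t-1) (t+1))) :=
      (isCompact_uIcc).prod isCompact_Icc
    obtain ⟨M1, hM1⟩ := hKc.exists_bound_of_continuousOn hcdt.continuousOn
    obtain ⟨M2, hM2⟩ := hKc.exists_bound_of_continuousOn hcdp.continuousOn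
    set M : ℝ := |M1| + |M2| + 1 with hMdef
    have hMpos : 0 < M := by positivity
    have hMdt : ∀ p ∈ Set.uIcc a b, ∀ s ∈ Set.Icc (t-1) (t+1), ‖dtf p s‖ ≤ M := by
      intro p hp s hs
      have := hM1 (p, s) (Set.mk_mem_prod hp hs)
      calc ‖dtf p s‖ ≤ M1 := this
        _ ≤ M := by rw [hMdef]; cases abs_cases M1 with
          | inl h => cases abs_cases M2 with
            | inl h2 => linarith [h.1, h2.1]
            | inr h2 => linarith [h.1, h2.1]
          | inr h => cases abs_cases M2 with
            | inl h2 => linarith [h.1, h2.1]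
            | inr h2 => linarith [h.1, h2.1]
    have hMdp : ∀ p ∈ Set.uIcc a b, ∀ s ∈ Set.Icc (t-1) (t+1), ‖dpf p s‖ ≤ M := by
      intro p hp s hs
      have := hM2 (p, s) (Set.mk_mem_prod hp hs)
      calc ‖dpf p s‖ ≤ M2 := this
        _ ≤ M := by rw [hMdef]; cases abs_cases M1 with
          | inl h => cases abs_cases M2 with
            | inl h2 => linarith [h.1, h2.1]
            | inr h2 => linarith [h.1, h2.1]
          | inr h => cases abs_cases M2 with
            | inl h2 => linarith [h.1, h2.1]
            | inr h2 => linarith [h.1, h2.1]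
    have hnormconj : ∀ z w : ℂ, ‖(starRingEnd ℂ) (Complex.I * z) * w‖ = ‖z‖ * ‖w‖ := by
      intro z w
      rw [norm_mul, map_mul, norm_mul, Complex.conj_I]
      simp
    have htmem : t ∈ Set.Icc (t-1) (t+1) := ⟨by linarith, by linarith⟩
    have hG : Tendsto G (𝓝[≠] t) (𝓝 DW) := by
      rw [hDWdef, hGdef]
      apply Tendsto.add
      · apply intervalIntegral.tendsto_integral_filter_of_dominated_convergence
          (bound := fun _ => 2 * (M * M))
        · apply Filter.Eventually.of_forall
          intro s
          apply Continuous.aestronglyMeasurable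
          exact ((hconjc.comp (((hfc s).sub (hfc t)).const_smul ((s-t)⁻¹))).mul (hdpc s)).sub
            ((hconjc.comp (hdpc t)).mul ((((hfc s).sub (hfc t)).const_smul ((s-t)⁻¹))))
        · have hball : ∀ᶠ s in 𝓝[≠] t, s ∈ Metric.ball t 1 :=
            eventually_nhdsWithin_of_eventually_nhds (Metric.ball_mem_nhds t one_pos)
          have hne : ∀ᶠ s in 𝓝[≠] t, s ≠ t := by
            filter_upwards [self_mem_nhdsWithin] with s hs
            exact hs
          filter_upwards [hball, hne] with s hsball hsne
          apply Filter.Eventually.of_forall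
          intro p hp
          have hmem : p ∈ Set.uIcc a b := uIoc_subset_uIcc hp
          have hsmem : s ∈ Set.Icc (t-1) (t+1) := by
            have := Metric.mem_ball.mp hsball
            rw [Real.dist_eq] at this
            constructor <;> [linarith [abs_lt.mp this]; linarith [(abs_lt.mp this).2]]
          have husb : ‖f p s - f p t‖ ≤ M * ‖s - t‖ :=
            Convex.norm_image_sub_le_of_norm_hasDerivWithin_le
              (f' := fun s' => dtf p s')
              (fun s' _ => (hdt p s').hasDerivWithinAt)
              (fun s' hs' => hMdt p hmem s' hs')
              (convex_Icc _ _) htmem hsmem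
          have hst : s - t ≠ 0 := sub_ne_zero.mpr hsne
          have hus : ‖(s-t)⁻¹ • (f p s - f p t)‖ ≤ M := by
            rw [norm_smul, Real.norm_eq_abs, abs_inv]
            rw [Real.norm_eq_abs] at husb
            calc |s-t|⁻¹ * ‖f p s - f p t‖ ≤ |s-t|⁻¹ * (M * |s-t|) := by
                  apply mul_le_mul_of_nonneg_left husb (inv_nonneg.mpr (abs_nonneg _))
              _ = M := by field_simp
          calc ‖(starRingEnd ℂ) (Complex.I * ((s-t)⁻¹ • (f p s - f p t))) * dpf p s
                - (starRingEnd ℂ) (Complex.I * dpf p t) * ((s-t)⁻¹ • (f p s - f p t))‖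
              ≤ ‖(starRingEnd ℂ) (Complex.I * ((s-t)⁻¹ • (f p s - f p t))) * dpf p s‖
                + ‖(starRingEnd ℂ) (Complex.I * dpf p t) * ((s-t)⁻¹ • (f p s - f p t))‖ :=
                norm_sub_le _ _
            _ = ‖(s-t)⁻¹ • (f p s - f p t)‖ * ‖dpf p s‖
                + ‖dpf p t‖ * ‖(s-t)⁻¹ • (f p s - f p t)‖ := by rw [hnormconj, hnormconj]
            _ ≤ M * M + M * M := by
                apply add_le_add
                · exact mul_le_mul hus (hMdp p hmem s hsmem) (norm_nonneg _) hMpos.le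
                · exact mul_le_mul (hMdp p hmem t htmem) hus (norm_nonneg _) hMpos.le
            _ = 2 * (M * M) := by ring
        · exact intervalIntegrable_const
        · apply Filter.Eventually.of_forall
          intro p _
          have h1 : Tendsto (fun s => (s - t)⁻¹ • (f p s - f p t)) (𝓝[≠] t) (𝓝 (dtf p t)) := by
            have := hasDerivAt_iff_tendsto_slope.mp (hdt p t)
            apply this.congr
            intro s
            rw [slope_def_module]
          have h2 : Tendsto (fun s => dpf p s) (𝓝[≠] t) (𝓝 (dpf p t)) :=
            ((hcdp.comp (continuous_const.prodMk continuous_id)).tendsto t).mono_left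
              nhdsWithin_le_nhds
          have hterm1 : Tendsto (fun s => (starRingEnd ℂ)
              (Complex.I * ((s - t)⁻¹ • (f p s - f p t))) * dpf p s) (𝓝[≠] t)
              (𝓝 ((starRingEnd ℂ) (Complex.I * dtf p t) * dpf p t)) :=
            ((hconjc.tendsto _).comp h1).mul h2
          have hterm2 : Tendsto (fun s => (starRingEnd ℂ) (Complex.I * dpf p t)
              * ((s - t)⁻¹ • (f p s - f p t))) (𝓝[≠] t)
              (𝓝 ((starRingEnd ℂ) (Complex.I * dpf p t) * dtf p t)) :=
            h1.const_mul _
          exact hterm1.sub hterm2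
      · apply Tendsto.sub
        · have hsl : Tendsto (fun s => slope (fun s' => f b s') t s) (𝓝[≠] t) (𝓝 (dtf b t)) :=
            hasDerivAt_iff_tendsto_slope.mp (hdt b t)
          have := hsl.const_mul ((starRingEnd ℂ) (Complex.I * f b t))
          apply this.congr
          intro s
          rw [slope_def_module]
        · have hsl : Tendsto (fun s => slope (fun s' => f a s') t s) (𝓝[≠] t) (𝓝 (dtf a t)) :=
            hasDerivAt_iff_tendsto_slope.mp (hdt a t)
          have := hsl.const_mul ((starRingEnd ℂ) (Complex.I * f a t))
          apply this.congr
          intro s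
          rw [slope_def_module]
    apply hG.congr'
    filter_upwards [self_mem_nhdsWithin] with s hs
    exact (hident s hs).symm
  have hre := Complex.reCLM.hasFDerivAt.comp_hasDerivAt t hWd
  rw [hΦ]
  refine hre.congr_deriv ?_
  rw [hDWdef]
  simp only [map_add, map_sub]
  congr 1
  · rw [← ContinuousLinearMap.intervalIntegral_comp_comm _ hDint]
    rfl
  · rw [rinner_conj, rinner_conj]
    rfl

/-- The oriented area enclosed by `cₜ` and the boundary curve `γₜ` on `Σ`,
`A(cₜ,γₜ) = ½∮_{cₜ}(p¹dp² - p²dp¹) - ½∮_{γₜ}(p¹dp² - p²dp¹)`, is constant in time: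
`d/dt A(cₜ,γₜ) = -∫ₐᵇ ⟨∂ₜcₜ, ν⟩ ds = 0`. -/
theorem area_preserved (F : APCSF) (S : SupportCurve) (hbc : F.NeumannBC S)
    (ta tb : ℝ) (γ : ℝ → ℝ → ℂ)
    (hγC1 : ContDiff ℝ 1 (Function.uncurry γ))
    (hγsm : ∀ t ∈ Set.Ico (0:ℝ) F.T, ContDiff ℝ (⊤ : ℕ∞) (fun p => γ p t))
    (hγS : ∀ p t, γ p t ∈ Set.range S.sf)
    (hγa : ∀ t ∈ Set.Ico (0:ℝ) F.T, γ ta t = F.c F.pa t)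
    (hγb : ∀ t ∈ Set.Ico (0:ℝ) F.T, γ tb t = F.c F.pb t)
    (A : ℝ → ℝ)
    (hA : ∀ t, A t
      = (1/2) * (∫ p in F.pa..F.pb, rinner (Complex.I * F.c p t) (pderiv F.c p t))
        - (1/2) * (∫ p in ta..tb, rinner (Complex.I * γ p t) (deriv (fun q => γ q t) p))) :
    ∀ t ∈ Set.Ico (0:ℝ) F.T,
      HasDerivAt A
        (-(∫ p in F.pa..F.pb,
            rinner (deriv (fun s => F.c p s) t) (F.nor p t) * ‖pderiv F.c p t‖)) t ∧
      (∫ p in F.pa..F.pb,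
          rinner (deriv (fun s => F.c p s) t) (F.nor p t) * ‖pderiv F.c p t‖) = 0 ∧
      A t = A 0 := by
  classical
  have hC1c : ContDiff ℝ 1 (Function.uncurry F.c) := F.hsmooth.of_le (mod_cast le_top)
  set dpc : ℝ → ℝ → ℂ := fun p s => fderiv ℝ (Function.uncurry F.c) (p, s) (1, 0) with hdpc_def
  set dtc : ℝ → ℝ → ℂ := fun p s => fderiv ℝ (Function.uncurry F.c) (p, s) (0, 1) with hdtc_def
  set dpγ : ℝ → ℝ → ℂ := fun p s => fderiv ℝ (Function.uncurry γ) (p, s) (1, 0) with hdpγ_def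
  set dtγ : ℝ → ℝ → ℂ := fun p s => fderiv ℝ (Function.uncurry γ) (p, s) (0, 1) with hdtγ_def
  have hdpc : ∀ p s, HasDerivAt (fun q => F.c q s) (dpc p s) p := fun p s =>
    hasDerivAt_slice_p hC1c p s
  have hdtc : ∀ p s, HasDerivAt (fun s' => F.c p s') (dtc p s) s := fun p s =>
    hasDerivAt_slice_t hC1c p s
  have hdpγ : ∀ p s, HasDerivAt (fun q => γ q s) (dpγ p s) p := fun p s =>
    hasDerivAt_slice_p hγC1 p s
  have hdtγ : ∀ p s, HasDerivAt (fun s' => γ p s') (dtγ p s) s := fun p s =>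
    hasDerivAt_slice_t hγC1 p s
  have hpdc : ∀ p s, pderiv F.c p s = dpc p s := fun p s => (hdpc p s).deriv
  have hdc_eq : ∀ p s, deriv (fun s' => F.c p s') s = dtc p s := fun p s => (hdtc p s).deriv
  have hcdpc : Continuous (Function.uncurry dpc) := cont_partial hC1c _
  have hcdtc : Continuous (Function.uncurry dtc) := cont_partial hC1c _
  have hcdpγ : Continuous (Function.uncurry dpγ) := cont_partial hγC1 _
  have hcdtγ : Continuous (Function.uncurry dtγ) := cont_partial hγC1 _
  have hkc := key F.c dpc dtc hdpc hdtc hC1c.continuous hcdpc hcdtc F.pa F.pb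
  have hkγ := key γ dpγ dtγ hdpγ hdtγ hγC1.continuous hcdpγ hcdtγ ta tb
  -- geometric facts
  have hnorm_nor : ∀ p s, ‖F.nor p s‖ = 1 := by
    intro p s
    rw [F.hnor, F.htang, norm_mul, Complex.norm_I, one_mul, norm_smul, norm_inv, norm_norm]
    exact inv_mul_cancel₀ (norm_ne_zero_iff.mpr (F.hreg p s))
  have hνν : ∀ p s, rinner (F.nor p s) (F.nor p s) = 1 := by
    intro p s
    rw [rinner_self, hnorm_nor]
    norm_num
  have hflow' : ∀ p, ∀ s ∈ Set.Ico (0:ℝ) F.T,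
      dtc p s = (F.curv p s - F.curvAvg s) • F.nor p s := fun p s hs =>
    (hdtc p s).unique (F.hflow p s hs)
  -- continuity facts for the curvature integrand
  have hnormInt : ∀ s, Continuous fun p => ‖pderiv F.c p s‖ := by
    intro s
    have h1 : (fun p => ‖pderiv F.c p s‖) = fun p => ‖dpc p s‖ := by
      funext p; rw [hpdc]
    rw [h1]
    exact (hcdpc.comp (continuous_id.prodMk continuous_const)).norm
  have hcurvInt : ∀ s, Continuous fun p => F.curv p s * ‖pderiv F.c p s‖ := by
    intro s
    have hslice : ContDiff ℝ (⊤ : ℕ∞) (fun q => F.c q s) :=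
      F.hsmooth.comp ((contDiff_id).prodMk contDiff_const)
    have hslice' : ContDiff ℝ ((⊤:ℕ∞) : WithTop ℕ∞) (fun q => F.c q s) := hslice.of_le (mod_cast le_top)
    have hm : ContDiff ℝ ((⊤:ℕ∞) : WithTop ℕ∞) (fun q => pderiv F.c q s) :=
      (contDiff_infty_iff_deriv.mp hslice').2
    have hmne : ∀ q, pderiv F.c q s ≠ 0 := fun q => F.hreg q s
    have hnormC : ContDiff ℝ ((⊤:ℕ∞) : WithTop ℕ∞) fun q => ‖pderiv F.c q s‖ :=
      hm.norm ℝ hmne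
    have htangC : ContDiff ℝ ((⊤:ℕ∞) : WithTop ℕ∞) (fun q => F.tang q s) := by
      have h2 : (fun q => F.tang q s) = fun q => (‖pderiv F.c q s‖⁻¹ : ℝ) • pderiv F.c q s :=
        funext fun q => F.htang q s
      rw [h2]
      exact (hnormC.inv fun q => norm_ne_zero_iff.mpr (hmne q)).smul hm
    have hdtang : Continuous fun q => deriv (fun q' => F.tang q' s) q :=
      (contDiff_infty_iff_deriv.mp htangC).2.continuous
    have hnorC : Continuous fun q => F.nor q s := by
      have h3 : (fun q => F.nor q s) = fun q => Complex.I * F.tang q s :=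
        funext fun q => F.hnor q s
      rw [h3]
      exact continuous_const.mul htangC.continuous
    have hid : (fun p => F.curv p s * ‖pderiv F.c p s‖)
        = fun p => rinner (deriv (fun q => F.tang q s) p) (F.nor p s) := by
      funext p
      rw [F.hfrenet p s, rinner_smul_left, hνν p s, mul_one]
    rw [hid]
    exact ((Complex.continuous_re.comp hdtang).mul (Complex.continuous_re.comp hnorC)).add
      ((Complex.continuous_im.comp hdtang).mul (Complex.continuous_im.comp hnorC))
  -- the flow integral vanishes
  have hint0 : ∀ s ∈ Set.Ico (0:ℝ) F.T, (∫ p in F.pa..F.pb,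
      rinner (deriv (fun s' => F.c p s') s) (F.nor p s) * ‖pderiv F.c p s‖) = 0 := by
    intro s hs
    have hptw : ∀ p, rinner (deriv (fun s' => F.c p s') s) (F.nor p s) * ‖pderiv F.c p s‖
        = F.curv p s * ‖pderiv F.c p s‖ - F.curvAvg s * ‖pderiv F.c p s‖ := by
      intro p
      rw [hdc_eq, hflow' p s hs, rinner_smul_left, hνν p s]
      ring
    rw [intervalIntegral.integral_congr (fun p _ => hptw p)]
    rw [intervalIntegral.integral_sub ((hcurvInt s).intervalIntegrable _ _)
      ((show Continuous fun p => F.curvAvg s * ‖pderiv F.c p s‖ from continuous_const.mul (hnormInt s)).intervalIntegrable _ _)]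
    rw [intervalIntegral.integral_const_mul, ← F.hcurvAvg s, ← F.hlen s]
    exact sub_self _
  -- boundary time-derivatives agree
  have hbdry : ∀ t ∈ Set.Ico (0:ℝ) F.T, dtγ ta t = dtc F.pa t ∧ dtγ tb t = dtc F.pb t := by
    intro t ht
    have hmem : Set.Ico t F.T ∈ 𝓝[Set.Ici t] t := by
      rw [← Set.Ici_inter_Iio]
      exact inter_mem_nhdsWithin _ (Iio_mem_nhds ht.2)
    have hu : UniqueDiffWithinAt ℝ (Set.Ici t) t := uniqueDiffOn_Ici t t Set.self_mem_Ici
    constructor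
    · have h1 : HasDerivWithinAt (fun s => γ ta s) (dtγ ta t) (Set.Ici t) t :=
        (hdtγ ta t).hasDerivWithinAt
      have h2 : HasDerivWithinAt (fun s => F.c F.pa s) (dtc F.pa t) (Set.Ici t) t :=
        (hdtc F.pa t).hasDerivWithinAt
      have heq : (fun s => F.c F.pa s) =ᶠ[𝓝[Set.Ici t] t] (fun s => γ ta s) := by
        filter_upwards [hmem] with s hs
        exact (hγa s ⟨le_trans ht.1 hs.1, hs.2⟩).symm
      have h1' : HasDerivWithinAt (fun s => F.c F.pa s) (dtγ ta t) (Set.Ici t) t :=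
        h1.congr_of_eventuallyEq heq (hγa t ht).symm
      rw [← h1'.derivWithin hu, ← h2.derivWithin hu]
    · have h1 : HasDerivWithinAt (fun s => γ tb s) (dtγ tb t) (Set.Ici t) t :=
        (hdtγ tb t).hasDerivWithinAt
      have h2 : HasDerivWithinAt (fun s => F.c F.pb s) (dtc F.pb t) (Set.Ici t) t :=
        (hdtc F.pb t).hasDerivWithinAt
      have heq : (fun s => F.c F.pb s) =ᶠ[𝓝[Set.Ici t] t] (fun s => γ tb s) := by
        filter_upwards [hmem] with s hs
        exact (hγb s ⟨le_trans ht.1 hs.1, hs.2⟩).symm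
      have h1' : HasDerivWithinAt (fun s => F.c F.pb s) (dtγ tb t) (Set.Ici t) t :=
        h1.congr_of_eventuallyEq heq (hγb t ht).symm
      rw [← h1'.derivWithin hu, ← h2.derivWithin hu]
  -- the γ interior integral vanishes (tangency)
  have hγint : ∀ t', (∫ p in ta..tb, ((starRingEnd ℂ) (Complex.I * dtγ p t') * dpγ p t'
      - (starRingEnd ℂ) (Complex.I * dpγ p t') * dtγ p t').re) = 0 := by
    intro t'
    have hptw : ∀ p, ((starRingEnd ℂ) (Complex.I * dtγ p t') * dpγ p t'
        - (starRingEnd ℂ) (Complex.I * dpγ p t') * dtγ p t').re = 0 := by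
      intro p
      obtain ⟨u, hu⟩ := hγS p t'
      obtain ⟨α, hα⟩ := S.tangent (hdtγ p t') (fun s => hγS p s) hu
      obtain ⟨β, hβ⟩ := S.tangent (hdpγ p t') (fun q => hγS q t') hu
      rw [hα, hβ]
      have h0 : (starRingEnd ℂ) (Complex.I * (α • deriv S.sf u)) * (β • deriv S.sf u)
          - (starRingEnd ℂ) (Complex.I * (β • deriv S.sf u)) * (α • deriv S.sf u) = 0 := by
        simp only [Complex.real_smul, map_mul, Complex.conj_I, Complex.conj_ofReal]
        ring
      rw [h0, Complex.zero_re]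
    rw [intervalIntegral.integral_congr (fun p _ => hptw p), intervalIntegral.integral_zero]
  -- pointwise identity for the c interior integrand
  have hcptw : ∀ t, t ∈ Set.Ico (0:ℝ) F.T → ∀ p,
      (1/2 : ℝ) * ((starRingEnd ℂ) (Complex.I * dtc p t) * dpc p t
        - (starRingEnd ℂ) (Complex.I * dpc p t) * dtc p t).re
      = -(rinner (deriv (fun s => F.c p s) t) (F.nor p t) * ‖pderiv F.c p t‖) := by
    intro t ht p
    have hcpne : pderiv F.c p t ≠ 0 := F.hreg p t
    have hcpnorm : ‖pderiv F.c p t‖ ≠ 0 := norm_ne_zero_iff.mpr hcpne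
    set cp := pderiv F.c p t with hcp
    set k := F.curv p t - F.curvAvg t with hk
    have hance : dtc p t = k • F.nor p t := hflow' p t ht
    have hν : F.nor p t = Complex.I * ((‖cp‖⁻¹:ℝ) • cp) := by rw [F.hnor, F.htang]
    have hdpcp : dpc p t = cp := (hpdc p t).symm
    rw [hdc_eq, hance, hν, hdpcp]
    have hX : (starRingEnd ℂ) (Complex.I * (k • (Complex.I * ((‖cp‖⁻¹:ℝ) • cp)))) * cp
        - (starRingEnd ℂ) (Complex.I * cp) * (k • (Complex.I * ((‖cp‖⁻¹:ℝ) • cp)))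
        = ((-(2*k*‖cp‖⁻¹) : ℝ) : ℂ) * ((starRingEnd ℂ) cp * cp) := by
      simp only [Complex.real_smul, map_mul, Complex.conj_I, Complex.conj_ofReal]
      push_cast
      linear_combination (2 * ((F.curv p t - F.curvAvg t : ℝ) : ℂ) * ((‖cp‖ : ℝ) : ℂ)⁻¹
        * ((starRingEnd ℂ) cp * cp)) * Complex.I_sq
    rw [hX]
    have hcc : (starRingEnd ℂ) cp * cp = ((Complex.normSq cp : ℝ) : ℂ) := by
      rw [mul_comm, Complex.mul_conj]
    rw [hcc, ← Complex.ofReal_mul, Complex.ofReal_re]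
    rw [rinner_smul_left, rinner_self]
    have hnorm : ‖Complex.I * ((‖cp‖⁻¹:ℝ) • cp)‖ = ‖cp‖⁻¹ * ‖cp‖ := by
      rw [norm_mul, Complex.norm_I, one_mul, norm_smul, Real.norm_eq_abs,
        _root_.abs_of_nonneg (inv_nonneg.mpr (norm_nonneg _))]
    rw [hnorm, inv_mul_cancel₀ hcpnorm]
    have hns : Complex.normSq cp = ‖cp‖^2 := by rw [Complex.normSq_eq_norm_sq]
    rw [hns]
    have hss : ‖cp‖⁻¹ * ‖cp‖ ^ 2 = ‖cp‖ := by
      rw [pow_two, ← mul_assoc, inv_mul_cancel₀ hcpnorm, one_mul]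
    linear_combination (-(F.curv p t - F.curvAvg t)) * hss
  -- main derivative statement
  have hmain : ∀ t ∈ Set.Ico (0:ℝ) F.T,
      HasDerivAt A (-(∫ p in F.pa..F.pb,
        rinner (deriv (fun s => F.c p s) t) (F.nor p t) * ‖pderiv F.c p t‖)) t := by
    intro t ht
    have hkc' := hkc t
    have hkγ' := hkγ t
    have hAeq : A = fun s => (1/2:ℝ) * (∫ p in F.pa..F.pb,
          rinner (Complex.I * F.c p s) (deriv (fun q => F.c q s) p))
        - (1/2:ℝ) * (∫ p in ta..tb, rinner (Complex.I * γ p s) (deriv (fun q => γ q s) p)) :=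
      funext fun s => hA s
    rw [hAeq]
    have hd := (hkc'.const_mul (1/2:ℝ)).sub (hkγ'.const_mul (1/2:ℝ))
    refine hd.congr_deriv ?_
    rw [hγint t, (hbdry t ht).1, (hbdry t ht).2, hγa t ht, hγb t ht]
    have hIc : (1/2:ℝ) * (∫ p in F.pa..F.pb,
        ((starRingEnd ℂ) (Complex.I * dtc p t) * dpc p t
          - (starRingEnd ℂ) (Complex.I * dpc p t) * dtc p t).re)
        = -(∫ p in F.pa..F.pb,
            rinner (deriv (fun s => F.c p s) t) (F.nor p t) * ‖pderiv F.c p t‖) := by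
      rw [← intervalIntegral.integral_const_mul]
      rw [intervalIntegral.integral_congr (fun p _ => hcptw t ht p)]
      rw [intervalIntegral.integral_neg]
    linarith [hIc]
  intro t ht
  refine ⟨hmain t ht, hint0 t ht, ?_⟩
  rcases eq_or_lt_of_le ht.1 with h0 | h0
  · rw [← h0]
  · have hsub : Set.Icc (0:ℝ) t ⊆ Set.Ico 0 F.T := fun s hs =>
      ⟨hs.1, lt_of_le_of_lt hs.2 ht.2⟩
    have hcont : ContinuousOn A (Set.Icc 0 t) := fun s hs =>
      ((hmain s (hsub hs)).continuousAt.continuousWithinAt)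
    have hder : ∀ s ∈ Set.Ico 0 t, HasDerivWithinAt A 0 (Set.Ici s) s := by
      intro s hs
      have hmem : s ∈ Set.Ico (0:ℝ) F.T := hsub ⟨hs.1, hs.2.le⟩
      have h1 := hmain s hmem
      rw [hint0 s hmem, neg_zero] at h1
      exact h1.hasDerivWithinAt
    exact constant_of_has_deriv_right_zero hcont hder t (Set.right_mem_Icc.mpr h0.le)
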